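/- arXiv:1907.11415 — 3 statements merged into one kernel-verified Lean document; each statement's English description precedes it below -/
import Mathlib

section
/- If μ is the weight of a highest weight multiset-valued tableau of shape λ (so μ ⊇ λ as partitions), then μ and λ have the same number of parts: ℓ(μ) = ℓ(λ). -/
/-! Signature rule on words: `+` for letter `i`, `-` for letter `i+1`,
cancel ordered pairs `-+`, leaving `+^p -^m`. -/

/-- Scanning left to right, returns (number of uncanceled `+`, number of uncanceled `-`). -/
def sigFold (i : ℕ) (w : List ℕ) : ℕ × ℕ :=
  w.foldl (fun pm a =>
    if a = i then (if 0 < pm.2 then (pm.1, pm.2 - 1) else (pm.1 + 1, pm.2))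
    else if a = i + 1 then (pm.1, pm.2 + 1) else pm) (0, 0)

/-- Position of the rightmost uncanceled `+` (a letter `i`). -/
def fPos (i : ℕ) (w : List ℕ) : Option ℕ :=
  ((List.range w.length).filter
    (fun j => decide (w[j]? = some i ∧ (sigFold i (w.take j)).2 = 0))).getLast?

/-- Position of the leftmost uncanceled `-` (a letter `i+1`). -/
def ePos (i : ℕ) (w : List ℕ) : Option ℕ :=
  ((List.range w.length).filter
    (fun j => decide (w[j]? = some (i + 1) ∧ (sigFold i (w.drop (j + 1))).1 = 0))).head?

/-- The crystal operator `f_i` on words: change the `i` at the rightmost uncanceled `+`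
into an `i+1`. -/
def fWord (i : ℕ) (w : List ℕ) : Option (List ℕ) :=
  (fPos i w).map (fun j => w.set j (i + 1))

/-- The crystal operator `e_i` on words: change the `i+1` at the leftmost uncanceled `-`
into an `i`. -/
def eWord (i : ℕ) (w : List ℕ) : Option (List ℕ) :=
  (ePos i w).map (fun j => w.set j i)

/-! Multiset-valued tableaux. -/

/-- `sh` is a partition: weakly decreasing list of positive integers. -/
def IsPartition (sh : List ℕ) : Prop :=
  sh.Pairwise (· ≥ ·) ∧ ∀ x ∈ sh, 0 < x

/-- The box in row `r`, column `c` (both 0-indexed) belongs to the Young diagram of `sh`. -/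
abbrev InShape (sh : List ℕ) (r c : ℕ) : Prop := c < sh.getD r 0

/-- A (semistandard) multiset-valued tableau of shape `sh` with entries in `{1, …, n}`:
every box of the shape is filled with a finite nonempty multiset, rows weakly increase
(max of a box ≤ min of the box to its right) and columns strictly increase. -/
def IsMVT (n : ℕ) (sh : List ℕ) (T : ℕ → ℕ → Multiset ℕ) : Prop :=
  (∀ r c, InShape sh r c → T r c ≠ 0) ∧
  (∀ r c, ¬ InShape sh r c → T r c = 0) ∧
  (∀ r c, ∀ x ∈ T r c, 1 ≤ x ∧ x ≤ n) ∧
  (∀ r c, InShape sh r (c + 1) → ∀ x ∈ T r c, ∀ y ∈ T r (c + 1), x ≤ y) ∧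
  (∀ r c, InShape sh (r + 1) c → ∀ x ∈ T r c, ∀ y ∈ T (r + 1) c, x < y)

/-- Number of boxes in column `c` of the shape `sh`. -/
def colHeight (sh : List ℕ) (c : ℕ) : ℕ := (sh.filter (fun p => decide (c < p))).length

/-- Sort a multiset increasingly into a list. -/
def msort (M : Multiset ℕ) : List ℕ := M.sort (· ≤ ·)

/-- Column reading word: the smallest entry of each box from bottom to top, then the
remaining entries of each box, smallest to largest, boxes top to bottom. -/
def colWord (sh : List ℕ) (T : ℕ → ℕ → Multiset ℕ) (c : ℕ) : List ℕ :=
  ((List.range (colHeight sh c)).reverse.map (fun r => (msort (T r c)).take 1)).flatten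
    ++ ((List.range (colHeight sh c)).map (fun r => (msort (T r c)).drop 1)).flatten

/-- The boxes corresponding to the letters of `colWord`, in order. -/
def colBoxes (sh : List ℕ) (T : ℕ → ℕ → Multiset ℕ) (c : ℕ) : List (ℕ × ℕ) :=
  ((List.range (colHeight sh c)).reverse.map
      (fun r => ((msort (T r c)).take 1).map (fun _ => (r, c)))).flatten
    ++ ((List.range (colHeight sh c)).map
      (fun r => ((msort (T r c)).drop 1).map (fun _ => (r, c)))).flatten

/-- The reading word of a multiset-valued tableau: column reading words, columns left to right. -/
def mvtWord (sh : List ℕ) (T : ℕ → ℕ → Multiset ℕ) : List ℕ :=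
  ((List.range (sh.headD 0)).map (colWord sh T)).flatten

/-- The boxes corresponding to the letters of `mvtWord`, in order. -/
def mvtBoxes (sh : List ℕ) (T : ℕ → ℕ → Multiset ℕ) : List (ℕ × ℕ) :=
  ((List.range (sh.headD 0)).map (colBoxes sh T)).flatten

/-- The crystal operator `f_i` on multiset-valued tableaux: act on the box `b` of the
rightmost uncanceled `+`; if the box below `b` contains an `i+1`, move the `i` from `b`
to an `i+1` in that box, otherwise replace the `i` in `b` by an `i+1`. -/
def mvtF (sh : List ℕ) (i : ℕ) (T : ℕ → ℕ → Multiset ℕ) :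
    Option (ℕ → ℕ → Multiset ℕ) :=
  (fPos i (mvtWord sh T)).map (fun j =>
    let rc := (mvtBoxes sh T).getD j (0, 0)
    let r := rc.1
    let c := rc.2
    if (i + 1) ∈ T (r + 1) c then
      fun r' c' =>
        if r' = r ∧ c' = c then T r c - {i}
        else if r' = r + 1 ∧ c' = c then T (r + 1) c + {i + 1}
        else T r' c'
    else
      fun r' c' => if r' = r ∧ c' = c then (T r c - {i}) + {i + 1} else T r' c')

/-- The crystal operator `e_i` on multiset-valued tableaux: act on the box `b` of the
leftmost uncanceled `-`; if the box above `b` contains an `i`, move the `i+1` from `b`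
to an `i` in that box, otherwise replace the `i+1` in `b` by an `i`. -/
def mvtE (sh : List ℕ) (i : ℕ) (T : ℕ → ℕ → Multiset ℕ) :
    Option (ℕ → ℕ → Multiset ℕ) :=
  (ePos i (mvtWord sh T)).map (fun j =>
    let rc := (mvtBoxes sh T).getD j (0, 0)
    let r := rc.1
    let c := rc.2
    if 0 < r ∧ i ∈ T (r - 1) c then
      fun r' c' =>
        if r' = r ∧ c' = c then T r c - {i + 1}
        else if r' = r - 1 ∧ c' = c then T (r - 1) c + {i}
        else T r' c'
    else
      fun r' c' => if r' = r ∧ c' = c then (T r c - {i + 1}) + {i} else T r' c')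

/-- A multiset-valued tableau is highest weight if it is killed by all raising operators. -/
def MvtHW (sh : List ℕ) (T : ℕ → ℕ → Multiset ℕ) : Prop :=
  ∀ i, 1 ≤ i → mvtE sh i T = none

/-! A highest weight tableau has the letters `r + 1`, and only those, in row `r`. Killing `e_i`
means every letter `i + 1` of the reading word has an uncanceled `i` to its right, i.e. every
suffix of the word has at least as many letters `i` as letters `i + 1`. If the largest entry
`x` of a box in row `r` exceeded `r + 1`, then (inducting on rows from the top and on columns
from the right) nothing read after `x` could be an `x - 1`: such a letter would sit in a higher
row, hence be too small, or lower in the same column, hence exceed `x`. The suffix starting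
at `x` then violates this ballot condition for `i = x - 1`. Hence the letters of the word are
exactly `1, …, ℓ(λ)`, and `μ_i ≠ 0` precisely for `i ≤ ℓ(λ)`. -/

theorem List.Pairwise.exists_flatten_map_split {ι α : Type*} {R : ι → ι → Prop}
    {g : ι → List α} {l : List ι} (hl : l.Pairwise R) {k : ι} (hk : k ∈ l)
    {x : α} {P L : List α} (hg : g k = P ++ x :: L) :
    ∃ P' L', (l.map g).flatten = P' ++ x :: (L ++ L') ∧
      ∀ y ∈ L', ∃ k' ∈ l, R k k' ∧ y ∈ g k' := by
  obtain ⟨xs, ys, rfl⟩ := List.append_of_mem hk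
  refine ⟨(xs.map g).flatten ++ P, (ys.map g).flatten, by simp [hg], ?_⟩
  intro y hy
  obtain ⟨k', hk', hy⟩ : ∃ k' ∈ ys, y ∈ g k' := by simpa using hy
  have hR : ∀ b ∈ ys, R k b := (List.pairwise_cons.mp (List.pairwise_append.mp hl).2.1).1
  exact ⟨k', by simp [hk'], hR k' hk', hy⟩

theorem List.getD_ne_zero_iff {l : List ℕ} (hl : ∀ x ∈ l, 0 < x) (k : ℕ) :
    l.getD k 0 ≠ 0 ↔ k < l.length := by
  rcases Nat.lt_or_ge k l.length with hk | hk
  · simpa [l.getD_eq_getElem 0 hk, hk] using (hl _ (l.getElem_mem hk)).ne'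
  · simp [hk]

def SuffixBallot (i : ℕ) (w : List ℕ) : Prop :=
  ∀ v, v <:+ w → v.count (i + 1) ≤ v.count i

theorem SuffixBallot.of_cons {i a : ℕ} {w : List ℕ} (h : SuffixBallot i (a :: w)) :
    SuffixBallot i w :=
  fun v hv => h v (hv.trans (List.suffix_cons a w))

def sigStep (i : ℕ) (pm : ℕ × ℕ) (a : ℕ) : ℕ × ℕ :=
  if a = i then (if 0 < pm.2 then (pm.1, pm.2 - 1) else (pm.1 + 1, pm.2))
  else if a = i + 1 then (pm.1, pm.2 + 1) else pm

theorem sigFold_eq_foldl (i : ℕ) (w : List ℕ) : sigFold i w = w.foldl (sigStep i) (0, 0) := rfl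

theorem foldl_sigStep_of_suffixBallot {i : ℕ} {w : List ℕ} (h : SuffixBallot i w)
    {p m : ℕ} (hm : m + w.count (i + 1) ≤ w.count i) :
    w.foldl (sigStep i) (p, m) = (p + w.count i - (m + w.count (i + 1)), 0) := by
  induction w generalizing p m with
  | nil => simp_all
  | cons a w ih =>
    have hw := h.of_cons
    have hw0 := hw w (List.suffix_refl w)
    rw [List.foldl_cons]
    rcases eq_or_ne a i with rfl | hai
    · rw [List.count_cons_self, List.count_cons_of_ne (Nat.ne_add_one a)] at hm ⊢
      rcases Nat.eq_zero_or_pos m with rfl | hm0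
      · rw [show sigStep a (p, 0) a = (p + 1, 0) by simp [sigStep], ih hw (by omega)]
        congr 1; omega
      · rw [show sigStep a (p, m) a = (p, m - 1) by simp [sigStep, hm0], ih hw (by omega)]
        congr 1; omega
    · rcases eq_or_ne a (i + 1) with rfl | hai1
      · rw [List.count_cons_self, List.count_cons_of_ne (Nat.ne_add_one i).symm] at hm ⊢
        rw [show sigStep i (p, m) (i + 1) = (p, m + 1) by simp [sigStep], ih hw (by omega)]
        congr 1; omega
      · rw [List.count_cons_of_ne hai, List.count_cons_of_ne hai1] at hm ⊢
        rw [show sigStep i (p, m) a = (p, m) by simp [sigStep, hai, hai1]]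
        exact ih hw hm

theorem sigFold_of_suffixBallot {i : ℕ} {w : List ℕ} (h : SuffixBallot i w) :
    sigFold i w = (w.count i - w.count (i + 1), 0) := by
  rw [sigFold_eq_foldl, foldl_sigStep_of_suffixBallot h (by simpa using h w (List.suffix_refl w))]
  simp

theorem suffixBallot_of_fst_sigFold_ne_zero {i : ℕ} {w : List ℕ}
    (h : ∀ t, (i + 1) :: t <:+ w → (sigFold i t).1 ≠ 0) : SuffixBallot i w := by
  induction w with
  | nil => intro v hv; simp [List.suffix_nil.mp hv]
  | cons a w ih =>
    have hw : SuffixBallot i w :=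
      ih fun t ht => h t (ht.trans (List.suffix_cons a w))
    intro v hv
    rcases List.suffix_cons_iff.mp hv with rfl | hv
    · by_cases ha : a = i + 1
      · subst ha
        have hpos := h w (List.suffix_refl _)
        rw [sigFold_of_suffixBallot hw] at hpos
        rw [List.count_cons_self, List.count_cons_of_ne (Nat.ne_add_one i).symm]
        dsimp only at hpos
        omega
      · rw [List.count_cons_of_ne ha]
        exact (hw w (List.suffix_refl w)).trans (List.count_le_count_cons ..)
    · exact hw v hv

theorem suffixBallot_of_ePos_eq_none {i : ℕ} {w : List ℕ} (h : ePos i w = none) :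
    SuffixBallot i w := by
  refine suffixBallot_of_fst_sigFold_ne_zero fun t ⟨P, hP⟩ hzero => ?_
  rw [ePos, List.head?_eq_none_iff, List.filter_eq_nil_iff] at h
  subst hP
  refine h P.length (List.mem_range.mpr (by simp)) ?_
  simpa [List.drop_append, List.drop_eq_nil_of_le] using hzero

theorem mem_msort {M : Multiset ℕ} {a : ℕ} : a ∈ msort M ↔ a ∈ M := Multiset.mem_sort _

theorem msort_ne_nil {M : Multiset ℕ} (h : M ≠ 0) : msort M ≠ [] := by
  rw [msort, ne_eq, ← Multiset.coe_eq_zero, Multiset.sort_eq]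
  exact h

section Shape

variable {sh : List ℕ}

theorem getD_antitone (hsh : sh.Pairwise (· ≥ ·)) {a b : ℕ} (hab : a ≤ b) :
    sh.getD b 0 ≤ sh.getD a 0 := by
  rcases Nat.lt_or_ge b sh.length with hb | hb
  · rw [sh.getD_eq_getElem 0 hb, sh.getD_eq_getElem 0 (hab.trans_lt hb)]
    rcases hab.lt_or_eq with h | rfl
    · exact List.pairwise_iff_getElem.mp hsh a b _ hb h
    · rfl
  · rw [sh.getD_eq_default 0 hb]
    exact Nat.zero_le _

theorem getD_le_head (hsh : sh.Pairwise (· ≥ ·)) (r : ℕ) : sh.getD r 0 ≤ sh.headD 0 := by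
  have h := getD_antitone hsh (Nat.zero_le r)
  cases sh <;> simp_all

theorem InShape.lt_length {r c : ℕ} (h : InShape sh r c) : r < sh.length := by
  by_contra hn
  rw [InShape, sh.getD_eq_default 0 (by omega)] at h
  omega

theorem InShape.of_le (hsh : sh.Pairwise (· ≥ ·)) {r c s d : ℕ} (h : InShape sh s d)
    (hrs : r ≤ s) (hcd : c ≤ d) : InShape sh r c :=
  hcd.trans_lt (h.trans_le (getD_antitone hsh hrs))

theorem lt_colHeight_iff (hsh : sh.Pairwise (· ≥ ·)) {r c : ℕ} :
    r < colHeight sh c ↔ InShape sh r c := by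
  induction sh generalizing r with
  | nil => simp [colHeight, InShape]
  | cons a t ih =>
    obtain ⟨ha, ht⟩ := List.pairwise_cons.mp hsh
    by_cases hca : c < a
    · cases r with
      | zero => simp [colHeight, InShape, hca]
      | succ r => simpa [colHeight, InShape, hca] using ih ht (r := r)
    · have hfilter : t.filter (fun p => decide (c < p)) = [] :=
        List.filter_eq_nil_iff.mpr fun b hb => by simpa using (ha b hb).trans (not_lt.mp hca)
      have hle : (a :: t).getD r 0 ≤ a := getD_antitone hsh (Nat.zero_le r)
      simp only [colHeight, InShape, List.filter_cons, hca, decide_false, Bool.false_eq_true,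
        if_false, hfilter, List.length_nil, Nat.not_lt_zero, false_iff]
      omega

end Shape

section ReadingWord

variable {sh : List ℕ} {T : ℕ → ℕ → Multiset ℕ}

theorem mem_colWord_iff {c y : ℕ} :
    y ∈ colWord sh T c ↔ ∃ s < colHeight sh c, y ∈ T s c := by
  simp only [colWord, List.mem_append, List.mem_flatten, List.mem_map, List.mem_reverse,
    List.mem_range, ← mem_msort (M := T _ c)]
  constructor
  · rintro (⟨_, ⟨s, hs, rfl⟩, hy⟩ | ⟨_, ⟨s, hs, rfl⟩, hy⟩)
    · exact ⟨s, hs, List.mem_of_mem_take hy⟩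
    · exact ⟨s, hs, List.mem_of_mem_drop hy⟩
  · rintro ⟨s, hs, hy⟩
    rw [← List.take_append_drop 1 (msort (T s c)), List.mem_append] at hy
    exact hy.imp (fun hy => ⟨_, ⟨s, hs, rfl⟩, hy⟩) (fun hy => ⟨_, ⟨s, hs, rfl⟩, hy⟩)

theorem mem_mvtWord_iff (hsh : sh.Pairwise (· ≥ ·)) {y : ℕ} :
    y ∈ mvtWord sh T ↔ ∃ r c, InShape sh r c ∧ y ∈ T r c := by
  simp only [mvtWord, List.mem_flatten, List.mem_map, List.mem_range]
  constructor
  · rintro ⟨_, ⟨c, -, rfl⟩, hy⟩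
    obtain ⟨r, hr, hy⟩ := mem_colWord_iff.mp hy
    exact ⟨r, c, (lt_colHeight_iff hsh).mp hr, hy⟩
  · rintro ⟨r, c, hr, hy⟩
    exact ⟨_, ⟨c, hr.trans_le (getD_le_head hsh r), rfl⟩,
      mem_colWord_iff.mpr ⟨r, (lt_colHeight_iff hsh).mpr hr, hy⟩⟩

/-- The largest entry of a box is the last letter the box contributes to `colWord`: in the
first pass if the box is a singleton, in the second otherwise. -/
theorem colWord_split {r c : ℕ} (hr : r < colHeight sh c) (hne : T r c ≠ 0) :
    ∃ x ∈ T r c, (∀ y ∈ T r c, y ≤ x) ∧ ∃ P L, colWord sh T c = P ++ x :: L ∧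
      ∀ y ∈ L, ∃ s < colHeight sh c, s ≠ r ∧ y ∈ T s c := by
  have hl := msort_ne_nil hne
  set x := (msort (T r c)).getLast hl
  refine ⟨x, mem_msort.mp (List.getLast_mem hl),
    fun y hy => ((T r c).pairwise_sort _).rel_getLast (mem_msort.mpr hy), ?_⟩
  by_cases hd : (msort (T r c)).drop 1 = []
  · have htake : (msort (T r c)).take 1 = [] ++ x :: [] := by
      obtain ⟨a, l, hal⟩ := List.exists_cons_of_ne_nil hl
      obtain rfl : l = [] := by simpa [hal] using hd
      simp [x, hal]
    obtain ⟨P, L, hsplit, hL⟩ :=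
      (List.pairwise_reverse.mpr List.pairwise_lt_range).exists_flatten_map_split
        (g := fun s => (msort (T s c)).take 1) (List.mem_reverse.mpr (List.mem_range.mpr hr)) htake
    refine ⟨P, L ++ ((List.range (colHeight sh c)).map fun s => (msort (T s c)).drop 1).flatten,
      by rw [colWord, hsplit]; simp, ?_⟩
    simp only [List.mem_append, List.mem_flatten, List.mem_map, List.mem_range]
    rintro y (hy | ⟨_, ⟨s, hs, rfl⟩, hy⟩)
    · obtain ⟨s, hs, hsr, hy⟩ := hL y hy
      exact ⟨s, List.mem_range.mp (List.mem_reverse.mp hs), hsr.ne,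
        mem_msort.mp (List.mem_of_mem_take hy)⟩
    · refine ⟨s, hs, ?_, mem_msort.mp (List.mem_of_mem_drop hy)⟩
      rintro rfl
      simp [hd] at hy
  · have hrest : (msort (T r c)).drop 1 = ((msort (T r c)).drop 1).dropLast ++ x :: [] := by
      have hlast : ((msort (T r c)).drop 1).getLast hd = x := List.getLast_drop hd
      rw [← hlast, List.dropLast_append_getLast hd]
    obtain ⟨P, L, hsplit, hL⟩ := List.pairwise_lt_range.exists_flatten_map_split
      (g := fun s => (msort (T s c)).drop 1) (List.mem_range.mpr hr) hrest
    refine ⟨((List.range (colHeight sh c)).reverse.map fun s => (msort (T s c)).take 1).flatten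
      ++ P, L, by rw [colWord, hsplit, List.append_assoc, List.nil_append], ?_⟩
    intro y hy
    obtain ⟨s, hs, hrs, hy⟩ := hL y (by simpa using hy)
    exact ⟨s, List.mem_range.mp hs, hrs.ne', mem_msort.mp (List.mem_of_mem_drop hy)⟩

theorem mvtWord_split (hsh : sh.Pairwise (· ≥ ·)) {r c : ℕ} (hrc : InShape sh r c)
    (hne : T r c ≠ 0) :
    ∃ x ∈ T r c, (∀ y ∈ T r c, y ≤ x) ∧ ∃ P L, mvtWord sh T = P ++ x :: L ∧
      ∀ y ∈ L, ∃ s c', InShape sh s c' ∧ (c < c' ∨ c' = c ∧ s ≠ r) ∧ y ∈ T s c' := by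
  obtain ⟨x, hx, hmax, P, L, hcol, hL⟩ := colWord_split ((lt_colHeight_iff hsh).mpr hrc) hne
  obtain ⟨P', L', hsplit, hL'⟩ := List.pairwise_lt_range.exists_flatten_map_split
    (List.mem_range.mpr (hrc.trans_le (getD_le_head hsh r))) hcol
  refine ⟨x, hx, hmax, P', L ++ L', hsplit, ?_⟩
  intro y hy
  rcases List.mem_append.mp hy with hy | hy
  · obtain ⟨s, hs, hsr, hy⟩ := hL y hy
    exact ⟨s, c, (lt_colHeight_iff hsh).mp hs, Or.inr ⟨rfl, hsr⟩, hy⟩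
  · obtain ⟨c', -, hcc', hy⟩ := hL' y hy
    obtain ⟨s, hs, hy⟩ := mem_colWord_iff.mp hy
    exact ⟨s, c', (lt_colHeight_iff hsh).mp hs, Or.inl hcc', hy⟩

end ReadingWord

namespace IsMVT

variable {n : ℕ} {sh : List ℕ} {T : ℕ → ℕ → Multiset ℕ}

theorem inShape_of_mem (hT : IsMVT n sh T) {r c y : ℕ} (hy : y ∈ T r c) : InShape sh r c := by
  by_contra h
  simp [hT.2.1 r c h] at hy

theorem exists_mem (hT : IsMVT n sh T) {r c : ℕ} (h : InShape sh r c) : ∃ y, y ∈ T r c :=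
  Multiset.exists_mem_of_ne_zero (hT.1 r c h)

theorem lt_of_mem_of_row_lt (hsh : sh.Pairwise (· ≥ ·)) (hT : IsMVT n sh T) {r s c x y : ℕ}
    (hrs : r < s) (hx : x ∈ T r c) (hy : y ∈ T s c) : x < y := by
  induction s, hrs using Nat.le_induction generalizing y with
  | base => exact hT.2.2.2.2 r c (hT.inShape_of_mem hy) x hx y hy
  | succ s hrs ih =>
    have hs := hT.inShape_of_mem hy
    obtain ⟨z, hz⟩ := hT.exists_mem (hs.of_le hsh s.le_succ le_rfl)
    exact (ih hz).trans (hT.2.2.2.2 s c hs z hz y hy)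

theorem row_lt_of_mem (hsh : sh.Pairwise (· ≥ ·)) (hT : IsMVT n sh T) {r c y : ℕ}
    (hy : y ∈ T r c) : r < y := by
  induction r generalizing y with
  | zero => exact (hT.2.2.1 0 c y hy).1
  | succ r ih =>
    have hrc := hT.inShape_of_mem hy
    obtain ⟨z, hz⟩ := hT.exists_mem (hrc.of_le hsh r.le_succ le_rfl)
    exact Nat.lt_of_le_of_lt (ih hz) (hT.2.2.2.2 r c hrc z hz y hy)

theorem le_row_succ_of_rows_above_of_right (hsh : sh.Pairwise (· ≥ ·)) (hT : IsMVT n sh T)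
    (hbal : ∀ i, 1 ≤ i → SuffixBallot i (mvtWord sh T)) {r c : ℕ}
    (habove : ∀ s < r, ∀ c' y, y ∈ T s c' → y ≤ s + 1)
    (hright : ∀ y ∈ T r (c + 1), y ≤ r + 1) {y : ℕ} (hy : y ∈ T r c) : y ≤ r + 1 := by
  have hrc := hT.inShape_of_mem hy
  obtain ⟨x, hx, hmax, P, L, hw, hL⟩ := mvtWord_split hsh hrc (hT.1 r c hrc)
  by_contra! hyr
  have hxr : r + 2 ≤ x := by have := hmax y hy; omega
  have hlast : ¬ InShape sh r (c + 1) := fun h => by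
    obtain ⟨z, hz⟩ := hT.exists_mem h
    have := hT.2.2.2.1 r c h x hx z hz
    have := hright z hz
    omega
  have hsuffix := hbal (x - 1) (by omega) (x :: L) (hw ▸ List.suffix_append P _)
  obtain ⟨s, c', hs, hcc', hxs⟩ := hL (x - 1) <| by
    rw [Nat.sub_add_cancel (by omega : 1 ≤ x), List.count_cons_self] at hsuffix
    have hmem : x - 1 ∈ x :: L := List.count_pos_iff.mp (by omega)
    exact (List.mem_cons.mp hmem).resolve_left (by omega)
  rcases Nat.lt_or_ge s r with hsr | hrs
  · have := habove s hsr c' _ hxs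
    omega
  rcases hcc' with hcc' | ⟨rfl, hsr⟩
  · exact hlast (hs.of_le hsh hrs hcc')
  · have := hT.lt_of_mem_of_row_lt hsh (lt_of_le_of_ne hrs (Ne.symm hsr)) hx hxs
    omega

theorem le_row_succ_of_suffixBallot (hsh : sh.Pairwise (· ≥ ·)) (hT : IsMVT n sh T)
    (hbal : ∀ i, 1 ≤ i → SuffixBallot i (mvtWord sh T)) : ∀ r c y, y ∈ T r c → y ≤ r + 1 := by
  intro r
  induction r using Nat.strong_induction_on with
  | _ r habove =>
  suffices ∀ k c, sh.getD r 0 ≤ c + k → ∀ y ∈ T r c, y ≤ r + 1 from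
    fun c y hy => this (sh.getD r 0) c (by omega) y hy
  intro k
  induction k with
  | zero => exact fun c hc y hy => absurd (hT.inShape_of_mem hy) (by rw [InShape]; omega)
  | succ k ih =>
    exact fun c hc y => hT.le_row_succ_of_rows_above_of_right hsh hbal habove
      (ih (c + 1) (by omega))

theorem eq_row_succ_of_suffixBallot (hsh : sh.Pairwise (· ≥ ·)) (hT : IsMVT n sh T)
    (hbal : ∀ i, 1 ≤ i → SuffixBallot i (mvtWord sh T)) {r c y : ℕ} (hy : y ∈ T r c) :
    y = r + 1 :=
  le_antisymm (hT.le_row_succ_of_suffixBallot hsh hbal r c y hy) (hT.row_lt_of_mem hsh hy)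

theorem count_mvtWord_ne_zero_iff (hsh : IsPartition sh) (hT : IsMVT n sh T)
    (hrow : ∀ r c y, y ∈ T r c → y = r + 1) (k : ℕ) :
    (mvtWord sh T).count (k + 1) ≠ 0 ↔ k < sh.length := by
  rw [ne_eq, List.count_eq_zero, not_not, mem_mvtWord_iff hsh.1]
  constructor
  · rintro ⟨r, c, hrc, hk⟩
    obtain rfl : r = k := by have := hrow r c _ hk; omega
    exact hrc.lt_length
  · intro hk
    have hk0 : InShape sh k 0 := by
      rw [InShape, sh.getD_eq_getElem 0 hk]
      exact hsh.2 _ (List.getElem_mem hk)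
    obtain ⟨y, hy⟩ := hT.exists_mem hk0
    exact ⟨k, 0, hk0, hrow k 0 y hy ▸ hy⟩

end IsMVT

theorem mvt_highest_weight_same_length_general
    (n : ℕ) (lam : List ℕ) (hlam : IsPartition lam)
    (T : ℕ → ℕ → Multiset ℕ) (hT : IsMVT n lam T) (hhw : MvtHW lam T)
    (mu : List ℕ)
    (hwt : ∀ i, (mvtWord lam T).count (i + 1) = mu.getD i 0)
    (hnotrail : ∀ x ∈ mu, 0 < x) :
    mu.length = lam.length := by
  have hbal : ∀ i, 1 ≤ i → SuffixBallot i (mvtWord lam T) := fun i hi =>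
    suffixBallot_of_ePos_eq_none (Option.map_eq_none_iff.mp (hhw i hi))
  have hrow : ∀ r c y, y ∈ T r c → y = r + 1 := fun _ _ _ hy =>
    hT.eq_row_succ_of_suffixBallot hlam.1 hbal hy
  refine eq_of_forall_lt_iff fun k => ?_
  rw [← List.getD_ne_zero_iff hnotrail, ← hwt, hT.count_mvtWord_ne_zero_iff hlam hrow]

/-- If `μ` is the weight of a highest weight multiset-valued tableau of
shape `λ` (so `μ ⊇ λ`), then `μ` and `λ` have the same number of parts: the number of
letters occurring in `T` equals the length of `λ`. -/
theorem mvt_highest_weight_same_length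
    (n : ℕ) (lam : List ℕ) (hlam : IsPartition lam)
    (T : ℕ → ℕ → Multiset ℕ) (hT : IsMVT n lam T) (hhw : MvtHW lam T)
    (mu : List ℕ) (hmu : IsPartition mu)
    (hwt : ∀ i, (mvtWord lam T).count (i + 1) = mu.getD i 0)
    (hnotrail : ∀ x ∈ mu, 0 < x) :
    mu.length = lam.length :=
  mvt_highest_weight_same_length_general n lam hlam T hT hhw mu hwt hnotrail
end

section
/- For an r×k rectangular shape λ = (k, k, ..., k) with r rows, the number of highest weight multiset-valued tableaux of shape λ and weight μ equals the number of semistandard Young tableaux of shape (μ_1 − k, μ_2 − k, ..., μ_r − k) with entries at most k. -/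
/-! Skew semistandard Young tableaux. -/

/-- The box `(r, c)` lies in the skew shape `μ/λ`. -/
abbrev InSkew (mu lam : List ℕ) (r c : ℕ) : Prop :=
  lam.getD r 0 ≤ c ∧ c < mu.getD r 0

/-- A semistandard Young tableau of skew shape `μ/λ`: positive entries, rows weakly
increasing, columns strictly increasing, zero outside the shape. -/
def IsSkewSSYT (mu lam : List ℕ) (S : ℕ → ℕ → ℕ) : Prop :=
  (∀ r c, ¬ InSkew mu lam r c → S r c = 0) ∧
  (∀ r c, InSkew mu lam r c → 1 ≤ S r c) ∧
  (∀ r c, InSkew mu lam r c → InSkew mu lam r (c + 1) → S r c ≤ S r (c + 1)) ∧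
  (∀ r c, InSkew mu lam r c → InSkew mu lam (r + 1) c → S r c < S (r + 1) c)

/-!
In a tableau of shape `k^r` whose letters are at most `r`, column strictness forces row `a` to
consist of the letter `a + 1` only, so such a tableau is the matrix `e a c` of multiplicities
minus one. For `1 ≤ i < r` the reading word of column `c` has `i`-signature `+^(e (i-1) c)
-^(e i c)`, so the tableau is killed by `e_i` iff, for every column `c`, the extra letters
of row `i` in columns `≥ c` are at most those of row `i - 1` in columns `> c`. Reading
`e a c` as the number of entries `k - c` in row `a` of a tableau of shape `μ - k` with entries
at most `k`, the same inequalities are column strictness, and the row lengths match; both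
sets are thus injective images of one set of matrices.
-/

def sigLetter (i a : ℕ) : ℕ × ℕ :=
  if a = i then (1, 0) else if a = i + 1 then (0, 1) else (0, 0)

/-- Multiplication of the bicyclic monoid, with `(p, m)` standing for `+^p -^m`. -/
def sigComb (s t : ℕ × ℕ) : ℕ × ℕ := (s.1 + (t.1 - s.2), t.2 + (s.2 - t.1))

lemma foldl_sigStep (i : ℕ) (w : List ℕ) (s : ℕ × ℕ) :
    w.foldl (sigStep i) s = sigComb s (sigFold i w) := by
  induction w generalizing s with
  | nil => simp [sigFold, sigComb]
  | cons a w ih =>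
    have h : sigFold i (a :: w) = w.foldl (sigStep i) (sigStep i (0, 0) a) := rfl
    rw [List.foldl_cons, h, ih, ih]
    obtain ⟨P, M⟩ := sigFold i w
    obtain ⟨p, m⟩ := s
    simp only [sigStep, sigComb]
    split_ifs <;> simp only [Prod.mk.injEq] <;> omega

lemma sigFold_append (i : ℕ) (u v : List ℕ) :
    sigFold i (u ++ v) = sigComb (sigFold i u) (sigFold i v) :=
  (List.foldl_append ..).trans (foldl_sigStep i v _)

lemma sigFold_cons (i a : ℕ) (w : List ℕ) :
    sigFold i (a :: w) = sigComb (sigLetter i a) (sigFold i w) := by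
  rw [← List.singleton_append, sigFold_append]
  congr 1

lemma sigFold_flatten (i : ℕ) (L : List (List ℕ)) :
    sigFold i L.flatten = (L.map (sigFold i)).foldr sigComb (0, 0) := by
  induction L with
  | nil => rfl
  | cons w L ih => rw [List.flatten_cons, sigFold_append, ih]; rfl

lemma sigFold_snd_cons_eq_zero_iff (i a : ℕ) (w : List ℕ) :
    (sigFold i (a :: w)).2 = 0 ↔
      (sigFold i w).2 = 0 ∧ ¬(a = i + 1 ∧ (sigFold i w).1 = 0) := by
  rw [sigFold_cons, sigLetter, sigComb]
  split_ifs <;> omega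

lemma sigFold_snd_le_count (i : ℕ) (w : List ℕ) : (sigFold i w).2 ≤ w.count (i + 1) := by
  induction w with
  | nil => simp [sigFold]
  | cons a w ih =>
    rw [sigFold_cons, sigLetter, sigComb, List.count_cons]
    split_ifs <;> grind

lemma sigFold_of_sorted (i : ℕ) {w : List ℕ} (hw : w.Pairwise (· ≤ ·)) :
    sigFold i w = (w.count i, w.count (i + 1)) := by
  induction w with
  | nil => rfl
  | cons a w ih =>
    rw [List.pairwise_cons] at hw
    rw [sigFold_cons, ih hw.2, sigLetter, sigComb, List.count_cons, List.count_cons]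
    have : a = i + 1 → w.count i = 0 := fun ha =>
      List.count_eq_zero.2 fun hi => by have := hw.1 i hi; omega
    split_ifs <;> simp_all [Nat.add_comm]

lemma sigFold_of_antitone (i : ℕ) {w : List ℕ} (hw : w.Pairwise (· ≥ ·)) :
    sigFold i w = (w.count i - w.count (i + 1), w.count (i + 1) - w.count i) := by
  induction w with
  | nil => rfl
  | cons a w ih =>
    rw [List.pairwise_cons] at hw
    rw [sigFold_cons, ih hw.2, sigLetter, sigComb, List.count_cons, List.count_cons]
    have : a = i → w.count (i + 1) = 0 := fun ha =>
      List.count_eq_zero.2 fun hi => by have := hw.1 _ hi; omega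
    split_ifs <;> simp_all <;> omega

lemma ePos_eq_none_iff_forall (i : ℕ) (w : List ℕ) : ePos i w = none ↔
    ∀ j, w[j]? = some (i + 1) → (sigFold i (w.drop (j + 1))).1 ≠ 0 := by
  rw [ePos, List.head?_eq_none_iff, List.filter_eq_nil_iff]
  constructor
  · intro h j hj
    simpa [hj] using h j (List.mem_range.2 (List.getElem?_eq_some_iff.1 hj).1)
  · intro h j _
    simpa using h j

/-- A letter `i + 1` is left uncanceled iff no `+` survives in the word to its right. -/
lemma ePos_eq_none_iff (i : ℕ) (w : List ℕ) : ePos i w = none ↔ (sigFold i w).2 = 0 := by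
  rw [ePos_eq_none_iff_forall]
  induction w with
  | nil => simp [sigFold]
  | cons a w ih =>
    rw [sigFold_snd_cons_eq_zero_iff, ← ih]
    constructor
    · intro h
      exact ⟨fun j hj => h (j + 1) hj, fun ⟨ha, h0⟩ => h 0 (by simp [ha]) h0⟩
    · rintro ⟨hw, ha⟩ (_ | j) hj
      · exact fun h0 => ha ⟨by simpa using hj, h0⟩
      · exact hw j hj

/-- The signature of a concatenation of the `n` blocks `c, …, c + n - 1`, block `d` having
signature `(p d, q d)`. -/
def sigProd (p q : ℕ → ℕ) (c n : ℕ) : ℕ × ℕ :=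
  ((List.range' c n).map fun d => (p d, q d)).foldr sigComb (0, 0)

lemma sigProd_succ (p q : ℕ → ℕ) (c n : ℕ) :
    sigProd p q c (n + 1) = sigComb (p c, q c) (sigProd p q (c + 1) n) := rfl

lemma sigProd_fst_add_sum (p q : ℕ → ℕ) (c n : ℕ) :
    (sigProd p q c n).1 + ∑ d ∈ Finset.Ico c (c + n), q d
      = (sigProd p q c n).2 + ∑ d ∈ Finset.Ico c (c + n), p d := by
  induction n generalizing c with
  | zero => simp [sigProd]
  | succ n ih =>
    have := ih (c + 1)
    rw [sigProd_succ, sigComb, show c + (n + 1) = c + 1 + n by omega,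
      Finset.sum_eq_sum_Ico_succ_bot (show c < c + 1 + n by omega) q,
      Finset.sum_eq_sum_Ico_succ_bot (show c < c + 1 + n by omega) p]
    dsimp only
    omega

lemma sigProd_snd_eq_zero_iff (p q : ℕ → ℕ) (c n : ℕ) :
    (sigProd p q c n).2 = 0 ↔ ∀ d, c ≤ d → d < c + n →
      ∑ x ∈ Finset.Ico d (c + n), q x ≤ ∑ x ∈ Finset.Ico (d + 1) (c + n), p x := by
  induction n generalizing c with
  | zero => exact iff_of_true rfl fun d h1 h2 => by omega
  | succ n ih =>
    have hsum := sigProd_fst_add_sum p q (c + 1) n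
    rw [sigProd_succ, sigComb, show c + (n + 1) = c + 1 + n by omega]
    dsimp only
    have hc : ∑ x ∈ Finset.Ico c (c + 1 + n), q x
        = q c + ∑ x ∈ Finset.Ico (c + 1) (c + 1 + n), q x :=
      Finset.sum_eq_sum_Ico_succ_bot (by omega) _
    constructor
    · intro h d hcd hd
      rcases hcd.eq_or_lt with rfl | hlt
      · omega
      · exact (ih (c + 1)).1 (by omega) d hlt hd
    · intro h
      have h1 := (ih (c + 1)).2 fun d hcd hd => h d (by omega) hd
      have h2 := h c le_rfl (by omega)
      omega

lemma mvtE_eq_none_iff (sh : List ℕ) (i : ℕ) (T : ℕ → ℕ → Multiset ℕ) :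
    mvtE sh i T = none ↔ (sigFold i (mvtWord sh T)).2 = 0 := by
  rw [mvtE, Option.map_eq_none_iff, ePos_eq_none_iff]

def rowBlocks (l : List ℕ) (g : ℕ → ℕ) : List ℕ :=
  (l.map fun a => List.replicate (g a) (a + 1)).flatten

lemma count_rowBlocks {l : List ℕ} (hl : l.Nodup) (g : ℕ → ℕ) (v : ℕ) :
    (rowBlocks l g).count (v + 1) = if v ∈ l then g v else 0 := by
  induction l with
  | nil => rfl
  | cons b l ih =>
    rw [List.nodup_cons] at hl
    simp only [rowBlocks, List.map_cons, List.flatten_cons, List.count_append,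
      List.count_replicate] at ih ⊢
    rw [ih hl.2]
    by_cases hb : b = v
    · subst hb
      simp [hl.1]
    · simp [hb, Ne.symm hb]

lemma rowBlocks_sorted {l : List ℕ} (hl : l.Pairwise (· < ·)) (g : ℕ → ℕ) :
    (rowBlocks l g).Pairwise (· ≤ ·) := by
  simp only [rowBlocks, List.pairwise_flatten, List.pairwise_map, List.forall_mem_map]
  refine ⟨fun a _ => List.pairwise_replicate.2 (Or.inr le_rfl), hl.imp ?_⟩
  intro a b hab x hx y hy
  rw [List.eq_of_mem_replicate hx, List.eq_of_mem_replicate hy]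
  omega

lemma rowBlocks_antitone {l : List ℕ} (hl : l.Pairwise (· > ·)) (g : ℕ → ℕ) :
    (rowBlocks l g).Pairwise (· ≥ ·) := by
  simp only [rowBlocks, List.pairwise_flatten, List.pairwise_map, List.forall_mem_map]
  refine ⟨fun a _ => List.pairwise_replicate.2 (Or.inr le_rfl), hl.imp ?_⟩
  intro a b hab x hx y hy
  rw [List.eq_of_mem_replicate hx, List.eq_of_mem_replicate hy]
  omega

def rectTableau (r k : ℕ) (e : ℕ → ℕ → ℕ) : ℕ → ℕ → Multiset ℕ :=
  fun a c => if a < r ∧ c < k then Multiset.replicate (e a c + 1) (a + 1) else 0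

def rowTail (k : ℕ) (e : ℕ → ℕ → ℕ) (a c : ℕ) : ℕ := ∑ d ∈ Finset.Ico c k, e a d

/-- The matrices `e` for which `rectTableau r k e` is highest weight, row `a` having `ν a`
letters beyond the first letter of each box. -/
def extraMatrices (r k : ℕ) (ν : List ℕ) : Set (ℕ → ℕ → ℕ) :=
  {e | (∀ a c, ¬(a < r ∧ c < k) → e a c = 0) ∧
    (∀ a < r, rowTail k e a 0 = ν.getD a 0) ∧
    ∀ i, 1 ≤ i → i < r → ∀ c < k, rowTail k e i c ≤ rowTail k e (i - 1) (c + 1)}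

lemma eq_succ_of_mem_column {f : ℕ → Multiset ℕ} {r : ℕ} (hne : ∀ a < r, f a ≠ 0)
    (hlt : ∀ a, a + 1 < r → ∀ x ∈ f a, ∀ y ∈ f (a + 1), x < y)
    (hbd : ∀ a < r, ∀ x ∈ f a, 1 ≤ x ∧ x ≤ r) {a x : ℕ} (ha : a < r)
    (hx : x ∈ f a) :
    x = a + 1 := by
  have lower : ∀ a < r, ∀ x ∈ f a, a + 1 ≤ x := by
    intro a
    induction a with
    | zero => exact fun h x hx => (hbd 0 h x hx).1
    | succ a ih =>
      intro h x hx
      obtain ⟨y, hy⟩ := Multiset.exists_mem_of_ne_zero (hne a (by omega))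
      have := ih (by omega) y hy
      have := hlt a h y hy x hx
      omega
  have upper : ∀ j a, a + j + 1 = r → ∀ x ∈ f a, x + j ≤ r := by
    intro j
    induction j with
    | zero => exact fun a h x hx => (hbd a (by omega) x hx).2
    | succ j ih =>
      intro a h x hx
      obtain ⟨y, hy⟩ := Multiset.exists_mem_of_ne_zero (hne (a + 1) (by omega))
      have := ih (a + 1) (by omega) y hy
      have := hlt a (by omega) x hx y hy
      omega
  have := lower a ha x hx
  have := upper (r - a - 1) a (by omega) x hx
  omega

section Rectangle

variable {n r k : ℕ} {T : ℕ → ℕ → Multiset ℕ}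

lemma inShape_replicate {a c : ℕ} : InShape (List.replicate r k) a c ↔ a < r ∧ c < k := by
  by_cases ha : a < r
  · simp [InShape, List.getD_eq_getElem?_getD, ha]
  · simp [InShape, List.getD_eq_getElem?_getD, ha]

lemma colHeight_replicate {c : ℕ} (hc : c < k) : colHeight (List.replicate r k) c = r := by
  rw [colHeight, List.filter_eq_self.2 fun a ha => by simpa [List.eq_of_mem_replicate ha]]
  exact List.length_replicate

lemma headD_replicate (hr : 0 < r) : (List.replicate r k).headD 0 = k := by
  obtain ⟨r, rfl⟩ := Nat.exists_eq_add_one_of_ne_zero hr.ne'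
  rfl

lemma msort_replicate (n x : ℕ) : msort (Multiset.replicate n x) = List.replicate n x :=
  List.eq_replicate_iff.2
    ⟨by simp [msort], fun _ hy => Multiset.eq_of_mem_replicate (by simpa [msort] using hy)⟩

lemma count_msort (M : Multiset ℕ) (v : ℕ) : (msort M).count v = M.count v := by
  rw [← Multiset.coe_count, msort, Multiset.sort_eq]

lemma count_colWord_replicate (T : ℕ → ℕ → Multiset ℕ) {c : ℕ} (hc : c < k) (v : ℕ) :
    (colWord (List.replicate r k) T c).count v = ∑ a ∈ Finset.range r, (T a c).count v := by
  rw [colWord, colHeight_replicate hc, List.count_append, List.count_flatten,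
    List.count_flatten, List.map_map, List.map_map, List.map_reverse, List.sum_reverse,
    ← List.sum_map_add, Finset.sum_eq_multiset_sum]
  congr 1
  refine List.map_congr_left fun a _ => ?_
  rw [Function.comp_apply, Function.comp_apply, ← List.count_append, List.take_append_drop,
    count_msort]

lemma count_mvtWord_replicate (hr : 0 < r) (T : ℕ → ℕ → Multiset ℕ) (v : ℕ) :
    (mvtWord (List.replicate r k) T).count v
      = ∑ c ∈ Finset.range k, ∑ a ∈ Finset.range r, (T a c).count v := by
  rw [mvtWord, headD_replicate hr, List.count_flatten, List.map_map, Finset.sum_eq_multiset_sum]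
  congr 1
  exact List.map_congr_left fun c hc => count_colWord_replicate T (List.mem_range.1 hc) v

lemma exists_eq_rectTableau (hT : IsMVT n (List.replicate r k) T)
    (hle : ∀ a c, ∀ x ∈ T a c, x ≤ r) :
    ∃ e : ℕ → ℕ → ℕ, (∀ a c, ¬(a < r ∧ c < k) → e a c = 0) ∧
      T = rectTableau r k e := by
  obtain ⟨hne, hzero, hbd, -, hcol⟩ := hT
  simp only [inShape_replicate] at hne hzero hcol
  refine ⟨fun a c => if a < r ∧ c < k then (T a c).card - 1 else 0,
    fun a c h => if_neg h, funext fun a => funext fun c => ?_⟩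
  by_cases h : a < r ∧ c < k
  · have hcard := Multiset.card_pos.2 (hne a c h)
    rw [rectTableau, if_pos h, if_pos h, Nat.sub_add_cancel hcard]
    refine Multiset.eq_replicate_card.2 fun x hx => ?_
    exact eq_succ_of_mem_column (f := (T · c)) (fun a ha => hne a c ⟨ha, h.2⟩)
      (fun a ha => hcol a c ⟨ha, h.2⟩) (fun a _ x hx => ⟨(hbd a c x hx).1, hle a c x hx⟩)
      h.1 hx
  · rw [rectTableau, if_neg h, hzero a c h]

lemma le_of_mem_of_count_mvtWord (hr : 0 < r) (hT : IsMVT n (List.replicate r k) T)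
    {mu : List ℕ} (hlen : mu.length = r)
    (hwt : ∀ i, (mvtWord (List.replicate r k) T).count (i + 1) = mu.getD i 0)
    {a c x : ℕ} (hx : x ∈ T a c) : x ≤ r := by
  obtain ⟨-, hzero, hbd, -, -⟩ := hT
  have hac : a < r ∧ c < k := by
    by_contra h
    rw [hzero a c (inShape_replicate.not.2 h)] at hx
    exact Multiset.notMem_zero x hx
  have hpos : 0 < (mvtWord (List.replicate r k) T).count x := by
    rw [count_mvtWord_replicate hr]
    calc 0 < (T a c).count x := Multiset.count_pos.2 hx
      _ ≤ ∑ a ∈ Finset.range r, (T a c).count x :=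
        Finset.single_le_sum (f := fun a => (T a c).count x) (fun _ _ => Nat.zero_le _)
          (Finset.mem_range.2 hac.1)
      _ ≤ _ := Finset.single_le_sum (f := fun c => ∑ a ∈ Finset.range r, (T a c).count x)
        (fun _ _ => Nat.zero_le _) (Finset.mem_range.2 hac.2)
  have hx1 := (hbd a c x hx).1
  rw [← Nat.sub_add_cancel hx1, hwt] at hpos
  by_contra h
  rw [List.getD_eq_default _ _ (by omega)] at hpos
  exact hpos.false

variable (e : ℕ → ℕ → ℕ)

lemma mem_rectTableau {a c x : ℕ} :
    x ∈ rectTableau r k e a c ↔ (a < r ∧ c < k) ∧ x = a + 1 := by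
  unfold rectTableau
  split_ifs with h <;> simp [h, Multiset.mem_replicate]

lemma isMVT_rectTableau (hn : r ≤ n) :
    IsMVT n (List.replicate r k) (rectTableau r k e) := by
  simp only [IsMVT, inShape_replicate]
  refine ⟨fun a c h => ?_, fun a c h => ?_, fun a c x hx => ?_, fun a c h x hx y hy => ?_,
    fun a c h x hx y hy => ?_⟩
  · simp [rectTableau, h]
  · simp [rectTableau, h]
  · simp only [mem_rectTableau e] at hx
    omega
  all_goals
    simp only [mem_rectTableau e] at hx hy
    omega

lemma count_mvtWord_rectTableau (hr : 0 < r) (i : ℕ) :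
    (mvtWord (List.replicate r k) (rectTableau r k e)).count (i + 1)
      = if i < r then rowTail k e i 0 + k else 0 := by
  have hbox : ∀ c ∈ Finset.range k,
      ∑ a ∈ Finset.range r, (rectTableau r k e a c).count (i + 1)
        = if i < r then e i c + 1 else 0 := by
    intro c hc
    have hcount : ∀ a ∈ Finset.range r, (rectTableau r k e a c).count (i + 1)
        = if a = i then e a c + 1 else 0 := by
      intro a ha
      split_ifs with h
      · subst h
        simp [rectTableau, Finset.mem_range.1 ha, Finset.mem_range.1 hc]
      · rw [Multiset.count_eq_zero, mem_rectTableau]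
        omega
    simp only [Finset.sum_congr rfl hcount, Finset.sum_ite_eq', Finset.mem_range]
  rw [count_mvtWord_replicate hr, Finset.sum_congr rfl hbox]
  split_ifs
  · rw [Finset.sum_add_distrib, rowTail, Finset.range_eq_Ico]
    simp
  · simp

lemma colWord_rectTableau {c : ℕ} (hc : c < k) :
    colWord (List.replicate r k) (rectTableau r k e) c
      = rowBlocks (List.range r).reverse (fun _ => 1) ++ rowBlocks (List.range r) (e · c) := by
  have hbox : ∀ a ∈ List.range r,
      msort (rectTableau r k e a c) = (a + 1) :: List.replicate (e a c) (a + 1) := by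
    intro a ha
    rw [rectTableau, if_pos ⟨List.mem_range.1 ha, hc⟩, msort_replicate]
    rfl
  rw [colWord, colHeight_replicate hc, rowBlocks, rowBlocks]
  congr 2
  · exact List.map_congr_left fun a ha => by rw [hbox a (List.mem_reverse.1 ha)]; rfl
  · exact List.map_congr_left fun a ha => by rw [hbox a ha]; rfl

lemma sigFold_colWord_rectTableau {i c : ℕ} (hi : 1 ≤ i) (hir : i < r) (hc : c < k) :
    sigFold i (colWord (List.replicate r k) (rectTableau r k e) c) = (e (i - 1) c, e i c) := by
  have hnd : (List.range r).Nodup := List.nodup_range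
  rw [colWord_rectTableau e hc, sigFold_append,
    sigFold_of_antitone i (rowBlocks_antitone (List.pairwise_reverse.2 List.pairwise_lt_range) _),
    sigFold_of_sorted i (rowBlocks_sorted List.pairwise_lt_range _)]
  obtain ⟨j, rfl⟩ := Nat.exists_eq_add_one_of_ne_zero (show i ≠ 0 by omega)
  simp only [count_rowBlocks hnd, count_rowBlocks (List.nodup_reverse.2 hnd), List.mem_reverse,
    List.mem_range, if_pos hir, if_pos (show j < r by omega), sigComb]
  simp

lemma sigFold_mvtWord_rectTableau (hr : 0 < r) {i : ℕ} (hi : 1 ≤ i) (hir : i < r) :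
    sigFold i (mvtWord (List.replicate r k) (rectTableau r k e))
      = sigProd (e (i - 1)) (e i) 0 k := by
  rw [mvtWord, sigFold_flatten, headD_replicate hr, List.map_map, sigProd,
    List.range_eq_range']
  congr 1
  refine List.map_congr_left fun c hc => ?_
  exact sigFold_colWord_rectTableau e hi hir (by simpa using hc)

lemma mvtHW_rectTableau_iff (hr : 0 < r) :
    MvtHW (List.replicate r k) (rectTableau r k e) ↔
      ∀ i, 1 ≤ i → i < r → ∀ c < k, rowTail k e i c ≤ rowTail k e (i - 1) (c + 1) := by
  simp only [MvtHW, mvtE_eq_none_iff]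
  refine forall_congr' fun i => imp_congr_right fun hi => ?_
  by_cases hir : i < r
  · rw [sigFold_mvtWord_rectTableau e hr hi hir, sigProd_snd_eq_zero_iff]
    simp only [zero_add, zero_le, true_implies, rowTail, hir]
  · have h0 := sigFold_snd_le_count i (mvtWord (List.replicate r k) (rectTableau r k e))
    rw [count_mvtWord_rectTableau e hr, if_neg hir] at h0
    simp only [hir, false_implies, iff_true]
    omega

end Rectangle

lemma getD_map_sub (mu : List ℕ) (k a : ℕ) : (mu.map (· - k)).getD a 0 = mu.getD a 0 - k := by
  simpa using List.getD_map mu 0 (n := a) (· - k)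

lemma count_mvtWord_rectTableau_eq_iff {r k : ℕ} (hr : 0 < r) {mu : List ℕ}
    (hlen : mu.length = r) (hge : ∀ i < r, k ≤ mu.getD i 0) (e : ℕ → ℕ → ℕ) :
    (∀ i, (mvtWord (List.replicate r k) (rectTableau r k e)).count (i + 1) = mu.getD i 0) ↔
      ∀ a < r, rowTail k e a 0 = (mu.map (· - k)).getD a 0 := by
  simp only [count_mvtWord_rectTableau e hr, getD_map_sub]
  constructor
  · intro h a ha
    have := h a
    rw [if_pos ha] at this
    omega
  · intro h i
    split_ifs with hi
    · have := h i hi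
      have := hge i hi
      omega
    · rw [List.getD_eq_default _ _ (by omega)]

theorem highestWeight_rect_eq_image_rectTableau {n r k : ℕ} (hr : 0 < r) (hn : r ≤ n)
    {mu : List ℕ} (hlen : mu.length = r) (hge : ∀ i < r, k ≤ mu.getD i 0) :
    {T : ℕ → ℕ → Multiset ℕ | IsMVT n (List.replicate r k) T ∧
        MvtHW (List.replicate r k) T ∧
        ∀ i, (mvtWord (List.replicate r k) T).count (i + 1) = mu.getD i 0}
      = rectTableau r k '' extraMatrices r k (mu.map (· - k)) := by
  ext T
  constructor
  · rintro ⟨hT, hhw, hwt⟩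
    obtain ⟨e, he, rfl⟩ :=
      exists_eq_rectTableau hT fun a c x hx => le_of_mem_of_count_mvtWord hr hT hlen hwt hx
    exact ⟨e, ⟨he, (count_mvtWord_rectTableau_eq_iff hr hlen hge e).1 hwt,
      (mvtHW_rectTableau_iff e hr).1 hhw⟩, rfl⟩
  · rintro ⟨e, ⟨-, hrow, hineq⟩, rfl⟩
    exact ⟨isMVT_rectTableau e hn, (mvtHW_rectTableau_iff e hr).2 hineq,
      (count_mvtWord_rectTableau_eq_iff hr hlen hge e).2 hrow⟩

lemma rectTableau_injOn (r k : ℕ) (ν : List ℕ) :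
    Set.InjOn (rectTableau r k) (extraMatrices r k ν) := by
  intro e he e' he' heq
  funext a c
  by_cases h : a < r ∧ c < k
  · have := congrArg Multiset.card (congrFun (congrFun heq a) c)
    simpa [rectTableau, h] using this
  · rw [he.1 a c h, he'.1 a c h]

lemma le_iff_lt_card_filter {f : ℕ → ℕ} {L : ℕ} (hf : MonotoneOn f (Set.Iio L)) {j : ℕ}
    (hj : j < L) (v : ℕ) : f j ≤ v ↔ j < ((Finset.range L).filter (f · ≤ v)).card := by
  constructor
  · intro hv
    have hsub : Finset.range (j + 1) ⊆ (Finset.range L).filter (f · ≤ v) := fun j' hj' => by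
      simp only [Finset.mem_range] at hj'
      simp only [Finset.mem_filter, Finset.mem_range]
      exact ⟨by omega, (hf (show j' < L by omega) hj (by omega)).trans hv⟩
    simpa using Finset.card_le_card hsub
  · intro hlt
    by_contra hv
    have hsub : (Finset.range L).filter (f · ≤ v) ⊆ Finset.range j := fun j' hj' => by
      simp only [Finset.mem_filter, Finset.mem_range] at hj' ⊢
      by_contra hjj
      exact hv ((hf hj hj'.1 (by omega)).trans hj'.2)
    simpa using (Finset.card_le_card hsub).trans_lt' hlt

lemma card_filter_le_succ (s : Finset ℕ) (f : ℕ → ℕ) (v : ℕ) :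
    (s.filter (f · ≤ v + 1)).card
      = (s.filter (f · ≤ v)).card + (s.filter (f · = v + 1)).card := by
  rw [← Finset.card_union_of_disjoint (Finset.disjoint_filter.2 fun _ _ h => by omega),
    ← Finset.filter_or]
  congr 1
  exact Finset.filter_congr fun _ _ => by omega

lemma lt_length_of_lt_getD {ν : List ℕ} {a j : ℕ} (h : j < ν.getD a 0) : a < ν.length := by
  by_contra ha
  rw [List.getD_eq_default _ _ (by omega)] at h
  exact Nat.not_lt_zero j h

lemma inSkew_nil {ν : List ℕ} {a j : ℕ} : InSkew ν [] a j ↔ j < ν.getD a 0 := by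
  simp [InSkew]

lemma rowTail_antitone (k : ℕ) (e : ℕ → ℕ → ℕ) (a : ℕ) : Antitone (rowTail k e a) :=
  fun _ _ h => Finset.sum_le_sum_of_subset (Finset.Ico_subset_Ico_left h)

lemma getD_le_getD_of_pairwise {ν : List ℕ} (hν : ν.Pairwise (· ≥ ·)) {a b : ℕ}
    (hab : a ≤ b) :
    ν.getD b 0 ≤ ν.getD a 0 := by
  by_cases hb : b < ν.length
  · rw [List.getD_eq_getElem _ _ hb, List.getD_eq_getElem _ _ (by omega)]
    rcases hab.eq_or_lt with rfl | h
    · exact le_rfl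
    · exact List.pairwise_iff_getElem.1 hν a b (by omega) hb h
  · rw [List.getD_eq_default _ _ (by omega)]
    exact Nat.zero_le _

/-- Row `a` of this tableau has `e a c` entries equal to `k - c`, for `c < k`. -/
noncomputable def ssytOfExtras (k : ℕ) (e : ℕ → ℕ → ℕ) (a j : ℕ) : ℕ :=
  sInf {v | j < rowTail k e a (k - v)}

def extrasOfSSYT (ν : List ℕ) (k : ℕ) (S : ℕ → ℕ → ℕ) (a c : ℕ) : ℕ :=
  ((Finset.range (ν.getD a 0)).filter (S a · = k - c)).card

section SSYT

variable {ν : List ℕ} {r k : ℕ} (hlen : ν.length = r)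
include hlen

section OfExtras

variable {e : ℕ → ℕ → ℕ} (he : e ∈ extraMatrices r k ν)
include he

lemma rowTail_zero (a : ℕ) : rowTail k e a 0 = ν.getD a 0 := by
  by_cases ha : a < r
  · exact he.2.1 a ha
  · rw [List.getD_eq_default _ _ (by omega), rowTail]
    exact Finset.sum_eq_zero fun c _ => he.1 a c (by omega)

lemma ssytOfExtras_le_iff {a j : ℕ} (hj : j < ν.getD a 0) (v : ℕ) :
    ssytOfExtras k e a j ≤ v ↔ j < rowTail k e a (k - v) := by
  have hmono : Monotone fun v => rowTail k e a (k - v) :=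
    fun _ _ h => rowTail_antitone k e a (Nat.sub_le_sub_left h k)
  have hex : ∃ v, j < rowTail k e a (k - v) :=
    ⟨k, by rwa [Nat.sub_self, rowTail_zero hlen he]⟩
  exact ⟨fun h => (Nat.sInf_mem (s := {v | j < rowTail k e a (k - v)}) hex).trans_le
    (hmono h), fun h => Nat.sInf_le h⟩

lemma ssytOfExtras_eq_zero {a j : ℕ} (hj : ν.getD a 0 ≤ j) : ssytOfExtras k e a j = 0 := by
  refine Nat.sInf_eq_zero.2 (Or.inr (Set.eq_empty_of_forall_notMem fun v hv => ?_))
  have := rowTail_antitone k e a (Nat.zero_le (k - v))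
  rw [rowTail_zero hlen he] at this
  exact absurd hv (by simp only [Set.mem_ofPred_eq]; omega)

lemma ssytOfExtras_le {a j : ℕ} (hj : j < ν.getD a 0) : ssytOfExtras k e a j ≤ k := by
  rwa [ssytOfExtras_le_iff hlen he hj, Nat.sub_self, rowTail_zero hlen he]

lemma isSkewSSYT_ssytOfExtras : IsSkewSSYT ν [] (ssytOfExtras k e) := by
  simp only [IsSkewSSYT, inSkew_nil]
  refine ⟨fun a j hj => ssytOfExtras_eq_zero hlen he (by omega), fun a j hj => ?_,
    fun a j hj hj' => ?_, fun a j hj hj' => ?_⟩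
  · by_contra h0
    have := (ssytOfExtras_le_iff hlen he hj 0).1 (by omega)
    simp [rowTail] at this
  · rw [ssytOfExtras_le_iff hlen he hj]
    exact Nat.lt_of_succ_lt ((ssytOfExtras_le_iff hlen he hj' _).1 le_rfl)
  · set v := ssytOfExtras k e (a + 1) j
    have hv1 : 1 ≤ v := by
      by_contra h0
      have := (ssytOfExtras_le_iff hlen he hj' 0).1 (by omega)
      simp [rowTail] at this
    have hvk : v ≤ k := ssytOfExtras_le hlen he hj'
    have hlt := (ssytOfExtras_le_iff hlen he hj' v).1 le_rfl
    have hineq := he.2.2 (a + 1) (by omega) (hlen ▸ lt_length_of_lt_getD hj') (k - v) (by omega)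
    suffices ssytOfExtras k e a j ≤ v - 1 by omega
    rw [ssytOfExtras_le_iff hlen he hj, show k - (v - 1) = k - v + 1 by omega]
    simpa using hlt.trans_le hineq

lemma card_filter_ssytOfExtras_le (a v : ℕ) :
    ((Finset.range (ν.getD a 0)).filter (ssytOfExtras k e a · ≤ v)).card
      = rowTail k e a (k - v) := by
  have hle : rowTail k e a (k - v) ≤ ν.getD a 0 :=
    rowTail_zero hlen he a ▸ rowTail_antitone k e a (Nat.zero_le _)
  rw [Finset.filter_congr fun j hj => ssytOfExtras_le_iff hlen he (Finset.mem_range.1 hj) v]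
  rw [show (Finset.range (ν.getD a 0)).filter (· < rowTail k e a (k - v))
      = Finset.range (rowTail k e a (k - v)) by
        ext; simp only [Finset.mem_filter, Finset.mem_range]; omega]
  exact Finset.card_range _

end OfExtras

lemma ssytOfExtras_injOn : Set.InjOn (ssytOfExtras k) (extraMatrices r k ν) := by
  intro e he e' he' heq
  have htail : ∀ a c, c ≤ k → rowTail k e a c = rowTail k e' a c := by
    intro a c hc
    have h := card_filter_ssytOfExtras_le hlen he a (k - c)
    rw [heq, card_filter_ssytOfExtras_le hlen he' a (k - c), Nat.sub_sub_self hc] at h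
    exact h.symm
  funext a c
  by_cases h : a < r ∧ c < k
  · have h1 := htail a c h.2.le
    have h2 := htail a (c + 1) h.2
    rw [rowTail, rowTail, Finset.sum_eq_sum_Ico_succ_bot h.2,
      Finset.sum_eq_sum_Ico_succ_bot h.2] at h1
    rw [rowTail, rowTail] at h2
    omega
  · rw [he.1 a c h, he'.1 a c h]

end SSYT

section OfSSYT

variable {ν : List ℕ} {k : ℕ} {S : ℕ → ℕ → ℕ} (hS : IsSkewSSYT ν [] S)
include hS

lemma card_filter_le_eq_rowTail (a : ℕ) {v : ℕ} (hv : v ≤ k) :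
    ((Finset.range (ν.getD a 0)).filter (S a · ≤ v)).card
      = rowTail k (extrasOfSSYT ν k S) a (k - v) := by
  induction v with
  | zero =>
    rw [Nat.sub_zero, rowTail, Finset.Ico_self, Finset.sum_empty, Finset.card_eq_zero,
      Finset.filter_eq_empty_iff]
    intro j hj
    have := hS.2.1 a j (inSkew_nil.2 (Finset.mem_range.1 hj))
    omega
  | succ v ih =>
    rw [card_filter_le_succ, ih (by omega), rowTail, rowTail,
      Finset.sum_eq_sum_Ico_succ_bot (show k - (v + 1) < k by omega),
      show k - (v + 1) + 1 = k - v by omega, extrasOfSSYT, Nat.sub_sub_self hv, Nat.add_comm]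

lemma monotoneOn_row (a : ℕ) : MonotoneOn (S a ·) (Set.Iio (ν.getD a 0)) :=
  monotoneOn_of_le_succ Set.ordConnected_Iio fun j _ hj hj1 => by
    simp only [Set.mem_Iio, Order.succ_eq_add_one] at hj hj1 ⊢
    exact hS.2.2.1 a j (inSkew_nil.2 hj) (inSkew_nil.2 hj1)

variable {r : ℕ} (hν : ν.Pairwise (· ≥ ·)) (hlen : ν.length = r)
  (hSk : ∀ a j, InSkew ν [] a j → S a j ≤ k)
include hν hlen hSk

lemma extrasOfSSYT_mem : extrasOfSSYT ν k S ∈ extraMatrices r k ν := by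
  refine ⟨fun a c hac => ?_, fun a _ => ?_, fun i hi hir c hc => ?_⟩
  · refine Finset.card_eq_zero.2 (Finset.filter_eq_empty_iff.2 fun j hj => ?_)
    have hj := Finset.mem_range.1 hj
    have := lt_length_of_lt_getD hj
    have := hS.2.1 a j (inSkew_nil.2 hj)
    omega
  · have h := card_filter_le_eq_rowTail hS a (le_refl k)
    rw [Nat.sub_self] at h
    rw [← h, Finset.filter_true_of_mem fun j hj =>
      hSk a j (inSkew_nil.2 (Finset.mem_range.1 hj)), Finset.card_range]
  · have h1 := card_filter_le_eq_rowTail hS i (Nat.sub_le k c)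
    have h2 := card_filter_le_eq_rowTail hS (i - 1) (show k - c - 1 ≤ k by omega)
    rw [Nat.sub_sub_self hc.le] at h1
    rw [show k - (k - c - 1) = c + 1 by omega] at h2
    rw [← h1, ← h2]
    refine Finset.card_le_card fun j hj => ?_
    simp only [Finset.mem_filter, Finset.mem_range] at hj ⊢
    have hj' : j < ν.getD (i - 1) 0 := hj.1.trans_le (getD_le_getD_of_pairwise hν (by omega))
    have := hS.2.2.2 (i - 1) j (inSkew_nil.2 hj')
      (by rw [Nat.sub_add_cancel hi]; exact inSkew_nil.2 hj.1)
    rw [Nat.sub_add_cancel hi] at this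
    omega

lemma ssytOfExtras_extrasOfSSYT : ssytOfExtras k (extrasOfSSYT ν k S) = S := by
  have he := extrasOfSSYT_mem hS hν hlen hSk
  funext a j
  by_cases hj : j < ν.getD a 0
  · have hiff : ∀ v ≤ k, ssytOfExtras k (extrasOfSSYT ν k S) a j ≤ v ↔ S a j ≤ v :=
      fun v hv => by
        rw [ssytOfExtras_le_iff hlen he hj, ← card_filter_le_eq_rowTail hS a hv,
          le_iff_lt_card_filter (monotoneOn_row hS a) hj]
    exact le_antisymm ((hiff _ (hSk a j (inSkew_nil.2 hj))).2 le_rfl)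
      ((hiff _ (ssytOfExtras_le hlen he hj)).1 le_rfl)
  · rw [ssytOfExtras_eq_zero hlen he (by omega), hS.1 a j (inSkew_nil.not.2 hj)]

end OfSSYT

theorem skewSSYT_eq_image_ssytOfExtras {ν : List ℕ} (hν : ν.Pairwise (· ≥ ·)) {r k : ℕ}
    (hlen : ν.length = r) :
    {S : ℕ → ℕ → ℕ | IsSkewSSYT ν [] S ∧ ∀ r' c, InSkew ν [] r' c → S r' c ≤ k}
      = ssytOfExtras k '' extraMatrices r k ν := by
  ext S
  constructor
  · rintro ⟨hS, hSk⟩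
    exact ⟨_, extrasOfSSYT_mem hS hν hlen hSk, ssytOfExtras_extrasOfSSYT hS hν hlen hSk⟩
  · rintro ⟨e, he, rfl⟩
    exact ⟨isSkewSSYT_ssytOfExtras hlen he,
      fun a j hj => ssytOfExtras_le hlen he (inSkew_nil.1 hj)⟩

theorem mvt_highest_weight_count_rectangle_general
    (n r k : ℕ) (hr : 0 < r) (hn : r ≤ n)
    (mu : List ℕ) (hmu : IsPartition mu) (hlen : mu.length = r)
    (hge : ∀ i < r, k ≤ mu.getD i 0) :
    Set.ncard {T : ℕ → ℕ → Multiset ℕ | IsMVT n (List.replicate r k) T ∧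
        MvtHW (List.replicate r k) T ∧
        ∀ i, (mvtWord (List.replicate r k) T).count (i + 1) = mu.getD i 0}
      = Set.ncard {S : ℕ → ℕ → ℕ | IsSkewSSYT (mu.map (· - k)) [] S ∧
        ∀ r' c, InSkew (mu.map (· - k)) [] r' c → S r' c ≤ k} := by
  have hν : (mu.map (· - k)).Pairwise (· ≥ ·) :=
    hmu.1.map _ fun _ _ h => Nat.sub_le_sub_right h k
  have hνlen : (mu.map (· - k)).length = r := by rw [List.length_map, hlen]
  rw [highestWeight_rect_eq_image_rectTableau hr hn hlen hge,
    skewSSYT_eq_image_ssytOfExtras hν hνlen, (rectTableau_injOn r k _).ncard_image,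
    (ssytOfExtras_injOn hνlen).ncard_image]

/-- For the `r × k` rectangular shape `λ = (k, …, k)`, the number of
highest weight multiset-valued tableaux of shape `λ` and weight `μ` equals the number of
semistandard Young tableaux of straight shape `(μ₁ − k, …, μ_r − k)` with entries at most
`k`. -/
theorem mvt_highest_weight_count_rectangle
    (n r k : ℕ) (hk : 0 < k) (hr : 0 < r) (hn : r ≤ n)
    (mu : List ℕ) (hmu : IsPartition mu) (hlen : mu.length = r)
    (hge : ∀ i < r, k ≤ mu.getD i 0) :
    Set.ncard {T : ℕ → ℕ → Multiset ℕ | IsMVT n (List.replicate r k) T ∧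
        MvtHW (List.replicate r k) T ∧
        ∀ i, (mvtWord (List.replicate r k) T).count (i + 1) = mu.getD i 0}
      = Set.ncard {S : ℕ → ℕ → ℕ | IsSkewSSYT (mu.map (· - k)) [] S ∧
        ∀ r' c, InSkew (mu.map (· - k)) [] r' c → S r' c ≤ k} :=
  mvt_highest_weight_count_rectangle_general n r k hr hn mu hmu hlen hge
end

section
/- If μ is the weight of some highest weight valued-set tableau of shape λ (equivalently the multiplicity V_λ^μ is nonzero), then ℓ(λ) = ℓ(μ). -/
/-! Valued-set tableaux. -/

/-- A semistandard Young tableau with each row partitioned into contiguous groups: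
`entry` gives the entries, and `start r c = true` marks that box `(r, c)` is the
leftmost box (the buoy) of its group. -/
structure VST where
  entry : ℕ → ℕ → ℕ
  start : ℕ → ℕ → Bool

/-- A valued-set tableau of shape `sh` with entries in `{1, …, n}`: a semistandard Young
tableau of shape `sh` whose rows are split into contiguous groups of equal entries. -/
def IsVST (n : ℕ) (sh : List ℕ) (T : VST) : Prop :=
  (∀ r c, ¬ InShape sh r c → T.entry r c = 0 ∧ T.start r c = false) ∧
  (∀ r c, InShape sh r c → 1 ≤ T.entry r c ∧ T.entry r c ≤ n) ∧
  (∀ r c, InShape sh r (c + 1) → T.entry r c ≤ T.entry r (c + 1)) ∧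
  (∀ r c, InShape sh (r + 1) c → T.entry r c < T.entry (r + 1) c) ∧
  (∀ r, InShape sh r 0 → T.start r 0 = true) ∧
  (∀ r c, InShape sh r (c + 1) → T.start r (c + 1) = false →
    T.entry r (c + 1) = T.entry r c)

/-- Tagged buoy reading word: the buoy entries, columns left to right, bottom to top
within each column; each letter is tagged with its box. -/
def vstTagged (sh : List ℕ) (T : VST) : List (ℕ × ℕ × ℕ) :=
  ((List.range (sh.headD 0)).map (fun c =>
    (List.range (colHeight sh c)).reverse.filterMap (fun r =>
      if T.start r c then some (T.entry r c, r, c) else none))).flatten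

/-- The (buoy) reading word of a valued-set tableau. -/
def vstWord (sh : List ℕ) (T : VST) : List ℕ := (vstTagged sh T).map (·.1)

/-- The column of the anchor (rightmost box) of the group whose buoy is in box `(r, c)`. -/
def anchorCol (sh : List ℕ) (T : VST) (r c : ℕ) : ℕ :=
  (((List.range (sh.getD r 0)).filter (fun c' =>
    decide (c ≤ c' ∧ (¬ InShape sh r (c' + 1) ∨ T.start r (c' + 1) = true)))).headD c)

/-- The crystal operator `f_i` on valued-set tableaux, acting on the group `g` of the
rightmost uncanceled `+`: if the entry immediately below the anchor of `g` is an `i+1`,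
move the divider between `g` and the group immediately to the left of `g` one step down;
otherwise change every `i` in `g` to an `i+1`. -/
def vstF (sh : List ℕ) (i : ℕ) (T : VST) : Option VST :=
  (fPos i (vstWord sh T)).map (fun j =>
    let t := (vstTagged sh T).getD j (0, 0, 0)
    let r := t.2.1
    let cs := t.2.2
    let ce := anchorCol sh T r cs
    if InShape sh (r + 1) ce ∧ T.entry (r + 1) ce = i + 1 then
      { T with start := fun r' c' =>
          if r' = r ∧ c' = cs then false
          else if r' = r + 1 ∧ c' = cs then true
          else T.start r' c' }
    else
      { T with entry := fun r' c' =>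
          if r' = r ∧ cs ≤ c' ∧ c' ≤ ce then i + 1 else T.entry r' c' })

/-- The crystal operator `e_i` on valued-set tableaux, acting on the group `g` of the
leftmost uncanceled `-`: if the entry immediately above the anchor of `g` is an `i`,
move the divider between `g` and the group immediately to the left of `g` one step up;
otherwise change every `i+1` in `g` to an `i`. -/
def vstE (sh : List ℕ) (i : ℕ) (T : VST) : Option VST :=
  (ePos i (vstWord sh T)).map (fun j =>
    let t := (vstTagged sh T).getD j (0, 0, 0)
    let r := t.2.1
    let cs := t.2.2
    let ce := anchorCol sh T r cs
    if 0 < r ∧ T.entry (r - 1) ce = i then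
      { T with start := fun r' c' =>
          if r' = r ∧ c' = cs then false
          else if r' + 1 = r ∧ c' = cs then true
          else T.start r' c' }
    else
      { T with entry := fun r' c' =>
          if r' = r ∧ cs ≤ c' ∧ c' ≤ ce then i else T.entry r' c' })

/-- A valued-set tableau is highest weight if it is killed by all raising operators. -/
def VstHW (sh : List ℕ) (T : VST) : Prop := ∀ i, 1 ≤ i → vstE sh i T = none

/-!
In a highest weight valued-set tableau every buoy with entry `k` lies in row `k` (rows counted
from 1). By induction on `k`: if a buoy `k + 1` sat in a row above row `k + 1`, then, since `e_k`
kills the tableau, this `k + 1` is cancelled in the signature by a later `k`, which by induction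
is a buoy of row `k`, in a column strictly to the right; row and column strictness then force
that entry to exceed `k`. The first column consists of buoys, so the letters of the reading word
are exactly `1, …, ℓ(λ)`, while by the weight condition they are exactly `1, …, ℓ(μ)`.
-/

lemma sigFold_fst_eq_zero {i : ℕ} {w : List ℕ} (h : i ∉ w) : (sigFold i w).1 = 0 := by
  suffices ∀ (w : List ℕ), i ∉ w → ∀ pm : ℕ × ℕ, (w.foldl (fun pm a =>
      if a = i then (if 0 < pm.2 then (pm.1, pm.2 - 1) else (pm.1 + 1, pm.2))
      else if a = i + 1 then (pm.1, pm.2 + 1) else pm) pm).1 = pm.1 from this w h (0, 0)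
  intro w
  induction w with
  | nil => simp
  | cons a w ih =>
    intro h pm
    simp only [List.mem_cons, not_or] at h
    rw [List.foldl_cons, if_neg (Ne.symm h.1)]
    split_ifs <;> exact ih h.2 _

/-- An uncancelled `i + 1` at position `j` of `w` would be reported by `ePos`. -/
lemma mem_drop_of_ePos_eq_none {i j : ℕ} {w : List ℕ} (hE : ePos i w = none)
    (hj : w[j]? = some (i + 1)) : i ∈ w.drop (j + 1) := by
  rw [ePos, List.head?_eq_none_iff, List.filter_eq_nil_iff] at hE
  have hjw : j < w.length := (List.getElem?_eq_some_iff.mp hj).1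
  by_contra hi
  simpa [hj, sigFold_fst_eq_zero hi] using hE j (List.mem_range.mpr hjw)

lemma vstE_eq_none_iff {sh : List ℕ} {i : ℕ} {T : VST} :
    vstE sh i T = none ↔ ePos i (vstWord sh T) = none :=
  Option.map_eq_none_iff

lemma getD_antitone_s12 {l : List ℕ} (h : l.Pairwise (· ≥ ·)) {i j : ℕ} (hij : i ≤ j) :
    l.getD j 0 ≤ l.getD i 0 := by
  rcases lt_or_ge j l.length with hj | hj
  · rw [List.getD_eq_getElem l 0 hj, List.getD_eq_getElem l 0 (hij.trans_lt hj)]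
    rcases hij.eq_or_lt with rfl | hlt
    · exact le_rfl
    · exact List.pairwise_iff_getElem.mp h i j _ hj hlt
  · rw [List.getD_eq_default l 0 hj]
    exact Nat.zero_le _

lemma getD_pos_iff {l : List ℕ} (hpos : ∀ x ∈ l, 0 < x) {i : ℕ} :
    0 < l.getD i 0 ↔ i < l.length := by
  rcases lt_or_ge i l.length with hi | hi
  · simpa [List.getD_eq_getElem l 0 hi, hi] using hpos _ (List.getElem_mem hi)
  · simp [hi.not_gt]

lemma lt_colHeight_iff_s12 {l : List ℕ} (h : l.Pairwise (· ≥ ·)) {r c : ℕ} :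
    r < colHeight l c ↔ InShape l r c := by
  induction l generalizing r with
  | nil => simp [colHeight]
  | cons a l ih =>
    by_cases hca : c < a
    · have hcol : colHeight (a :: l) c = colHeight l c + 1 := by
        simp [colHeight, hca]
      cases r with
      | zero => simp [hcol, hca]
      | succ r => simpa [hcol] using ih (List.pairwise_cons.mp h).2
    · have hcol : colHeight (a :: l) c = 0 := by
        simp only [colHeight, List.length_eq_zero_iff, List.filter_eq_nil_iff,
          decide_eq_true_eq, not_lt]
        intro x hx
        rcases List.mem_cons.mp hx with rfl | hx
        · exact not_lt.mp hca
        · exact ((List.pairwise_cons.mp h).1 x hx).trans (not_lt.mp hca)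
      have := getD_antitone_s12 h (Nat.zero_le r)
      simp only [hcol, InShape, List.getD_cons_zero] at this ⊢
      omega

/-- The reading order of boxes `(row, column)`: columns left to right, bottom to top. -/
def ReadsBefore (b b' : ℕ × ℕ) : Prop := b.2 < b'.2 ∨ (b.2 = b'.2 ∧ b'.1 < b.1)

lemma pairwise_readsBefore_vstTagged (sh : List ℕ) (T : VST) :
    (vstTagged sh T).Pairwise (fun t u => ReadsBefore t.2 u.2) := by
  have hcol : ∀ (c : ℕ) (t : ℕ × ℕ × ℕ), t ∈ (List.range (colHeight sh c)).reverse.filterMap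
      (fun r => if T.start r c then some (T.entry r c, r, c) else none) → t.2.2 = c := by
    intro c t ht
    obtain ⟨r, -, hrt⟩ := List.mem_filterMap.mp ht
    cases (Option.ite_none_right_eq_some.mp hrt).2
    rfl
  rw [vstTagged, List.pairwise_flatten, List.pairwise_map]
  constructor
  · simp only [List.mem_map, forall_exists_index, and_imp]
    rintro _ c - rfl
    rw [List.pairwise_filterMap, List.pairwise_reverse]
    refine List.pairwise_lt_range.imp fun hrr' b hb b' hb' => ?_
    cases (Option.ite_none_right_eq_some.mp hb).2
    cases (Option.ite_none_right_eq_some.mp hb').2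
    exact Or.inr ⟨rfl, hrr'⟩
  · refine List.pairwise_lt_range.imp fun {c c'} hcc' x hx y hy => Or.inl ?_
    rw [hcol c x hx, hcol c' y hy]
    exact hcc'

section Tableau

variable {n : ℕ} {lam : List ℕ} {T : VST}

lemma inShape_of_le_row (hlam : lam.Pairwise (· ≥ ·)) {r r' c : ℕ} (hrr' : r ≤ r')
    (h : InShape lam r' c) : InShape lam r c :=
  h.trans_le (getD_antitone_s12 hlam hrr')

lemma mem_vstTagged_iff (hlam : lam.Pairwise (· ≥ ·)) {t : ℕ × ℕ × ℕ} :
    t ∈ vstTagged lam T ↔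
      ∃ r c, InShape lam r c ∧ T.start r c = true ∧ t = (T.entry r c, r, c) := by
  have hhead : ∀ {r c}, InShape lam r c → c < lam.headD 0 := fun h => by
    rw [List.headD_eq_getD]
    exact inShape_of_le_row hlam (Nat.zero_le _) h
  simp only [vstTagged, List.mem_flatten, List.mem_map, List.mem_range, exists_exists_and_eq_and,
    List.mem_filterMap, List.mem_reverse, Option.ite_none_right_eq_some, Option.some_inj,
    lt_colHeight_iff_s12 hlam]
  constructor
  · rintro ⟨c, -, r, hr, hst, rfl⟩
    exact ⟨r, c, hr, hst, rfl⟩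
  · rintro ⟨r, c, hr, hst, rfl⟩
    exact ⟨c, hhead hr, r, hr, hst, rfl⟩

lemma entry_le_entry_of_le_col (hT : IsVST n lam T) {r c c' : ℕ} (hcc' : c ≤ c')
    (h : InShape lam r c') : T.entry r c ≤ T.entry r c' := by
  induction c', hcc' using Nat.le_induction with
  | base => exact le_rfl
  | succ c' _ ih =>
    exact (ih (Nat.lt_of_succ_lt h)).trans (hT.2.2.1 r c' h)

lemma entry_add_le_entry_of_le_row (hlam : lam.Pairwise (· ≥ ·)) (hT : IsVST n lam T)
    {r r' c : ℕ} (hrr' : r ≤ r') (h : InShape lam r' c) :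
    T.entry r c + (r' - r) ≤ T.entry r' c := by
  induction r', hrr' using Nat.le_induction with
  | base => simp
  | succ r' hrr' ih =>
    have := ih (inShape_of_le_row hlam r'.le_succ h)
    have := hT.2.2.2.1 r' c h
    omega

lemma row_lt_entry (hlam : lam.Pairwise (· ≥ ·)) (hT : IsVST n lam T) {r c : ℕ}
    (h : InShape lam r c) : r < T.entry r c := by
  have := entry_add_le_entry_of_le_row hlam hT (Nat.zero_le r) h
  have := (hT.2.1 0 c (inShape_of_le_row hlam (Nat.zero_le r) h)).1
  omega

lemma exists_readsBefore_of_vstE_eq_none (hlam : lam.Pairwise (· ≥ ·)) {i : ℕ}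
    (he : vstE lam i T = none) {r c : ℕ} (hrc : InShape lam r c) (hst : T.start r c = true)
    (hent : T.entry r c = i + 1) :
    ∃ r' c', InShape lam r' c' ∧ T.start r' c' = true ∧ T.entry r' c' = i ∧
      ReadsBefore (r, c) (r', c') := by
  set L := vstTagged lam T
  obtain ⟨j, hj, hLj⟩ :=
    List.getElem_of_mem ((mem_vstTagged_iff hlam).mpr ⟨r, c, hrc, hst, rfl⟩)
  have hwj : (vstWord lam T)[j]? = some (i + 1) := by
    simp [vstWord, hj, hLj, hent]
  have hi := mem_drop_of_ePos_eq_none (vstE_eq_none_iff.mp he) hwj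
  rw [vstWord, ← List.map_drop, List.mem_map] at hi
  obtain ⟨t, htL, rfl⟩ := hi
  have hread : ReadsBefore L[j].2 t.2 :=
    (pairwise_readsBefore_vstTagged lam T).rel_of_mem_take_of_mem_drop
      (List.mem_take_iff_getElem.mpr ⟨j, by omega, rfl⟩) htL
  obtain ⟨r', c', hrc', hst', rfl⟩ :=
    (mem_vstTagged_iff hlam).mp (List.mem_of_mem_drop htL)
  rw [hLj] at hread
  exact ⟨r', c', hrc', hst', rfl, hread⟩

lemma buoy_entry_eq_row_succ_of_vstHW (hlam : lam.Pairwise (· ≥ ·)) (hT : IsVST n lam T)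
    (hhw : VstHW lam T) {r c : ℕ} (hrc : InShape lam r c) (hst : T.start r c = true) :
    T.entry r c = r + 1 := by
  induction hk : T.entry r c using Nat.strong_induction_on generalizing r c with
  | _ k ih =>
    have hlt := row_lt_entry hlam hT hrc
    by_contra hne
    obtain ⟨r', c', hrc', hst', hent', hread⟩ :=
      exists_readsBefore_of_vstE_eq_none hlam (hhw (k - 1) (by omega)) hrc hst (by omega)
    have hr' := ih _ (by omega) hrc' hst' hent'
    have hcc' : c < c' := by
      rcases hread with h | ⟨-, h⟩ <;> simp only at h <;> omega
    have hrr' : r ≤ r' := by omega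
    have := entry_le_entry_of_le_col hT hcc'.le (inShape_of_le_row hlam hrr' hrc')
    have := entry_add_le_entry_of_le_row hlam hT hrr' hrc'
    omega

lemma succ_mem_vstWord_iff_of_vstHW (hlam : IsPartition lam) (hT : IsVST n lam T)
    (hhw : VstHW lam T) {i : ℕ} : i + 1 ∈ vstWord lam T ↔ i < lam.length := by
  simp only [vstWord, List.mem_map, mem_vstTagged_iff hlam.1]
  constructor
  · rintro ⟨_, ⟨r, c, hrc, hst, rfl⟩, hent⟩
    rw [buoy_entry_eq_row_succ_of_vstHW hlam.1 hT hhw hrc hst, Nat.succ_inj] at hent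
    subst hent
    exact (getD_pos_iff hlam.2).mp (Nat.zero_lt_of_lt hrc)
  · intro hi
    have hi0 : InShape lam i 0 := (getD_pos_iff hlam.2).mpr hi
    have hst := hT.2.2.2.2.1 i hi0
    exact ⟨_, ⟨i, 0, hi0, hst, rfl⟩, buoy_entry_eq_row_succ_of_vstHW hlam.1 hT hhw hi0 hst⟩

end Tableau

/-- If `μ` is the weight of some highest weight valued-set tableau of
shape `λ`, then `ℓ(λ) = ℓ(μ)`. -/
theorem vst_highest_weight_same_length
    (n : ℕ) (lam : List ℕ) (hlam : IsPartition lam)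
    (T : VST) (hT : IsVST n lam T) (hhw : VstHW lam T)
    (mu : List ℕ) (hmu : IsPartition mu)
    (hwt : ∀ i, (vstWord lam T).count (i + 1) = mu.getD i 0) :
    lam.length = mu.length := by
  refine eq_of_forall_lt_iff fun i => ?_
  rw [← succ_mem_vstWord_iff_of_vstHW hlam hT hhw, ← List.count_pos_iff, hwt,
    getD_pos_iff hmu.2]
end
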